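/- The 1:4 configuration for $n=5$, given by the north pole $(0,0,1)$ and four points $(R\cos(\pi k/2), R\sin(\pi k/2), -1/4)$ for $k = 0,1,2,3$ with $R = \sqrt{15}/4$, satisfies the critical configuration equations $2 w_k = \sum_{j\neq k} \frac{w_k - w_j}{\|w_k - w_j\|^2}$ for all $k$, and its Gram matrix has off-diagonal entries $-1/4$ (pole to base), $1/16$ (adjacent base points), and $-7/8$ (opposite base points). -/

import Mathlib

open Finset Real

/-- The `1:4` configuration: the north pole and four points equidistributed
on the circle at height `z = -1/4`. -/
noncomputable def oneFour : Fin 5 → EuclideanSpace ℝ (Fin 3) := fun k =>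
  if k = 0 then (WithLp.equiv 2 (Fin 3 → ℝ)).symm ![0, 0, 1]
  else (WithLp.equiv 2 (Fin 3 → ℝ)).symm
    ![(Real.sqrt 15 / 4) * Real.cos (π * ((k : ℕ) - 1) / 2),
      (Real.sqrt 15 / 4) * Real.sin (π * ((k : ℕ) - 1) / 2), -1/4]

noncomputable def vv (a b c : ℝ) : EuclideanSpace ℝ (Fin 3) :=
  (WithLp.equiv 2 (Fin 3 → ℝ)).symm ![a, b, c]

lemma vv_sub (a b c d e f : ℝ) : vv a b c - vv d e f = vv (a-d) (b-e) (c-f) := by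
  ext i; fin_cases i <;> rfl

lemma vv_smul (r a b c : ℝ) : r • vv a b c = vv (r*a) (r*b) (r*c) := by
  ext i; fin_cases i <;> rfl

lemma vv_add (a b c d e f : ℝ) : vv a b c + vv d e f = vv (a+d) (b+e) (c+f) := by
  ext i; fin_cases i <;> rfl

lemma vv_congr {a b c d e f : ℝ} (h1 : a = d) (h2 : b = e) (h3 : c = f) :
    vv a b c = vv d e f := by rw [h1, h2, h3]

lemma vv_inner (a b c d e f : ℝ) : (inner ℝ (vv a b c) (vv d e f) : ℝ) = a*d + b*e + c*f := by
  simp [vv, PiLp.inner_apply, Fin.sum_univ_three, RCLike.inner_apply]; ring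

lemma vv_norm_sq (a b c : ℝ) : ‖vv a b c‖^2 = a^2 + b^2 + c^2 := by
  rw [← real_inner_self_eq_norm_sq, vv_inner]; ring

lemma oneFour_0 : oneFour 0 = vv 0 0 1 := rfl
lemma oneFour_1 : oneFour 1 = vv (Real.sqrt 15 / 4) 0 (-1/4) := by
  have h : ((((1 : Fin 5)) : ℕ) : ℝ) = 1 := by norm_num
  simp only [oneFour, if_neg (show (1:Fin 5) ≠ 0 by decide), h, vv]
  norm_num []
lemma oneFour_2 : oneFour 2 = vv 0 (Real.sqrt 15 / 4) (-1/4) := by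
  have h : ((((2 : Fin 5)) : ℕ) : ℝ) = 2 := by norm_num
  simp only [oneFour, if_neg (show (2:Fin 5) ≠ 0 by decide), h, vv]
  norm_num [show (π * (2-1) / 2 : ℝ) = π/2 by ring, Real.cos_pi_div_two, Real.sin_pi_div_two]
lemma oneFour_3 : oneFour 3 = vv (-(Real.sqrt 15 / 4)) 0 (-1/4) := by
  have h : ((((3 : Fin 5)) : ℕ) : ℝ) = 3 := by norm_num [show (((3:Fin 5)):ℕ) = 3 from rfl]
  simp only [oneFour, if_neg (show (3:Fin 5) ≠ 0 by decide), h, vv]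
  norm_num [show (π * (3-1) / 2 : ℝ) = π by ring, Real.cos_pi, Real.sin_pi]
lemma oneFour_4 : oneFour 4 = vv 0 (-(Real.sqrt 15 / 4)) (-1/4) := by
  have h : ((((4 : Fin 5)) : ℕ) : ℝ) = 4 := by norm_num [show (((4:Fin 5)):ℕ) = 4 from rfl]
  simp only [oneFour, if_neg (show (4:Fin 5) ≠ 0 by decide), h, vv]
  norm_num [show (π * 3 / 2 : ℝ) = π + π/2 by ring, show (π * (4-1) / 2 : ℝ) = π + π/2 by ring, Real.cos_add, Real.sin_add, Real.cos_pi, Real.sin_pi, Real.cos_pi_div_two, Real.sin_pi_div_two]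


lemma fm0 (h : 0 < 5) : (⟨0, h⟩ : Fin 5) = 0 := rfl
lemma fm1 (h : 1 < 5) : (⟨1, h⟩ : Fin 5) = 1 := rfl
lemma fm2 (h : 2 < 5) : (⟨2, h⟩ : Fin 5) = 2 := rfl
lemma fm3 (h : 3 < 5) : (⟨3, h⟩ : Fin 5) = 3 := rfl
lemma fm4 (h : 4 < 5) : (⟨4, h⟩ : Fin 5) = 4 := rfl

theorem part1 : ∀ k : Fin 5, (2 : ℝ) • oneFour k =
      ∑ j ∈ Finset.univ.erase k, (‖oneFour k - oneFour j‖ ^ 2)⁻¹ • (oneFour k - oneFour j) := by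
  have h15 : Real.sqrt 15 ^ 2 = 15 := Real.sq_sqrt (by norm_num)
  have hinv : (Real.sqrt 15)⁻¹ ^ 2 = 1/15 := by
    rw [inv_pow, h15]; norm_num
  intro k
  fin_cases k <;>
  · rw [Finset.sum_erase_eq_sub (Finset.mem_univ _), Fin.sum_univ_five]
    simp only [fm0, fm1, fm2, fm3, fm4, oneFour_0, oneFour_1, oneFour_2, oneFour_3, oneFour_4,
      vv_sub, vv_norm_sq, vv_smul, vv_add]
    refine vv_congr ?_ ?_ ?_ <;> norm_num [div_pow, h15] <;> ring_nf <;>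
      rw [hinv] <;> ring

theorem part2 : ∀ k : Fin 5, k ≠ 0 → (inner ℝ (oneFour 0) (oneFour k) : ℝ) = -1/4 := by
  intro k hk
  fin_cases k <;>
    simp_all [fm0, fm1, fm2, fm3, fm4, oneFour_0, oneFour_1, oneFour_2, oneFour_3, oneFour_4,
      vv, Fin.sum_univ_three, PiLp.inner_apply, RCLike.inner_apply]

theorem part3 : ∀ i j : Fin 5, i ≠ 0 → j ≠ 0 → ((i : ℕ) - 1 + 1) % 4 = ((j : ℕ) - 1) % 4 →
      (inner ℝ (oneFour i) (oneFour j) : ℝ) = 1/16 := by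
  intro i j hi hj h
  fin_cases i <;> fin_cases j <;>
    simp_all [fm0, fm1, fm2, fm3, fm4, oneFour_0, oneFour_1, oneFour_2, oneFour_3, oneFour_4,
      vv, Fin.sum_univ_three, PiLp.inner_apply, RCLike.inner_apply] <;>
    nlinarith [Real.sq_sqrt (show (0:ℝ) ≤ 15 by norm_num)]

theorem part4 : ∀ i j : Fin 5, i ≠ 0 → j ≠ 0 → ((i : ℕ) - 1 + 2) % 4 = ((j : ℕ) - 1) % 4 →
      (inner ℝ (oneFour i) (oneFour j) : ℝ) = -7/8 := by
  intro i j hi hj h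
  fin_cases i <;> fin_cases j <;>
    simp_all [fm0, fm1, fm2, fm3, fm4, oneFour_0, oneFour_1, oneFour_2, oneFour_3, oneFour_4,
      vv, Fin.sum_univ_three, PiLp.inner_apply, RCLike.inner_apply] <;>
    nlinarith [Real.sq_sqrt (show (0:ℝ) ≤ 15 by norm_num)]

theorem one_four_is_critical :
    (∀ k : Fin 5, (2 : ℝ) • oneFour k =
      ∑ j ∈ Finset.univ.erase k, (‖oneFour k - oneFour j‖ ^ 2)⁻¹ • (oneFour k - oneFour j)) ∧
    (∀ k : Fin 5, k ≠ 0 → (inner ℝ (oneFour 0) (oneFour k) : ℝ) = -1/4) ∧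
    (∀ i j : Fin 5, i ≠ 0 → j ≠ 0 → ((i : ℕ) - 1 + 1) % 4 = ((j : ℕ) - 1) % 4 →
      (inner ℝ (oneFour i) (oneFour j) : ℝ) = 1/16) ∧
    (∀ i j : Fin 5, i ≠ 0 → j ≠ 0 → ((i : ℕ) - 1 + 2) % 4 = ((j : ℕ) - 1) % 4 →
      (inner ℝ (oneFour i) (oneFour j) : ℝ) = -7/8) := by
  exact ⟨part1, part2, part3, part4⟩
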